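/- Consider the differential inclusion ẋ ∈ F(x) on X = [−1,1] where F(x) = {0} for x ∈ [−1,0), F(0) = [0,1], and F(x) = {1−x} for x ∈ (0,1]. Then for S = [−1,1] (which is invariant), A = {1} is an attractor in S, and the restricted omega-limit set of the point 0 is ω_S(0) = [0,1]; in particular ω_S(0) ∩ A ≠ ∅ but ω_S(0) ⊄ A. -/

import Mathlib

/-
Since `F ≥ 0` on `[-1, 1]`, solutions are nondecreasing. Points of `(0, 1]` follow `ẋ = 1 - x`,
and `ẋ(t) = 1 - x(t) ≥ 1 - x(T)` on `[0, T]` gives `(1 - x(T))(1 + T) ≤ 1 - x(0)`: the approach to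
`1` is uniform on `(0, 1]`, so `ω_S((0, 1]) = {1}`. At `0`, however, `F(0) = [0, 1]` allows a
solution to rest for any time `s` before leaving along `1 - e^{s - t}`; hence every value in
`[0, 1)` is reached from `0` at arbitrarily late times, and `ω_S(0) = [0, 1]`.
-/

open Set MeasureTheory Filter Topology

namespace DIncl

variable {E : Type*} [NormedAddCommGroup E] [NormedSpace ℝ E] [CompleteSpace E]

/-- Upper semicontinuity of a set-valued map on a set `D`. -/
def USCOn {α β : Type*} [PseudoMetricSpace α] [PseudoMetricSpace β]
    (F : α → Set β) (D : Set α) : Prop :=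
  ∀ x ∈ D, ∀ ε > 0, ∃ δ > 0, ∀ y ∈ D, dist y x < δ →
    F y ⊆ {z | ∃ w ∈ F x, dist z w < ε}

/-- The Filippov conditions on `D`: upper semicontinuous with compact, convex,
nonempty values. -/
def FilippovOn {α : Type*} [PseudoMetricSpace α] (F : α → Set E) (D : Set α) : Prop :=
  USCOn F D ∧ ∀ x ∈ D, IsCompact (F x) ∧ Convex ℝ (F x) ∧ (F x).Nonempty

/-- `x` is a solution of the differential inclusion `ẋ ∈ F x` on the set `I`,
staying in `X`: an absolutely continuous function whose a.e. derivative lies in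
`F (x t)`, encoded via the integral representation `x b = x a + ∫_a^b v`. -/
def IsSolOn (F : E → Set E) (X : Set E) (x : ℝ → E) (I : Set ℝ) : Prop :=
  (∀ t ∈ I, x t ∈ X) ∧
  ∃ v : ℝ → E,
    (∀ a ∈ I, ∀ b ∈ I, IntervalIntegrable v volume a b) ∧
    (∀ᵐ t ∂volume, t ∈ I → v t ∈ F (x t)) ∧
    (∀ a ∈ I, ∀ b ∈ I, x b = x a + ∫ t in a..b, v t)

/-- The solution multiflow `Φ(T,a)` of `ẋ ∈ F x` in `X`. -/
def mflow (F : E → Set E) (X : Set E) (T : ℝ) (a : E) : Set E :=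
  {b | ∃ x : ℝ → E, IsSolOn F X x (Icc 0 T) ∧ x 0 = a ∧ x T = b}

/-- `Φ(I,U)`. -/
def mflowSet (F : E → Set E) (X : Set E) (I : Set ℝ) (U : Set E) : Set E :=
  ⋃ t ∈ I, ⋃ a ∈ U, mflow F X t a

/-- Maximal invariant subset of `U`: points admitting a full-time orbit in `U`. -/
def maxInv (F : E → Set E) (U : Set E) : Set E :=
  {x | ∃ ψ : ℝ → E, IsSolOn F U ψ univ ∧ ψ 0 = x}

/-- `S` is invariant: every point of `S` has a full-time orbit staying in `S`. -/
def IsInvSet (F : E → Set E) (S : Set E) : Prop := S ⊆ maxInv F S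

/-- The restricted omega-limit set `ω_S(U)` (with `Φ^S = mflow F S`). -/
def omegaS (F : E → Set E) (S U : Set E) : Set E :=
  ⋂ t ∈ Ici (0:ℝ), closure (mflowSet F S (Ici t) U)

/-- `(Φ^S)^*(I,U)` for the dual (backward-time) multiflow. -/
def mflowDualSet (F : E → Set E) (S : Set E) (I : Set ℝ) (U : Set E) : Set E :=
  ⋃ t ∈ I, ⋃ a ∈ U, {b | a ∈ mflow F S (-t) b}

/-- The restricted alpha-limit set `α_S(U)`. -/
def alphaS (F : E → Set E) (S U : Set E) : Set E :=
  ⋂ t ∈ Iio (0:ℝ), closure (mflowDualSet F S (Iic t) U)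

/-- The interior of `U` relative to `X`. -/
def relInt (X U : Set E) : Set E := {x ∈ X | U ∈ nhdsWithin x X}

/-- The closure of `U` relative to `X`. -/
def relCl (X U : Set E) : Set E := closure U ∩ X

/-- `A` is an attractor in `S`: the `ω_S`-limit set of a neighborhood of itself in `S`. -/
def IsAttractorIn (F : E → Set E) (S A : Set E) : Prop :=
  A ⊆ S ∧ ∃ U, A ⊆ relInt S U ∧ U ⊆ S ∧ omegaS F S U = A

/-- `R` is a repeller in `S`: the `α_S`-limit set of a neighborhood of itself in `S`. -/
def IsRepellerIn (F : E → Set E) (S R : Set E) : Prop :=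
  R ⊆ S ∧ ∃ U, R ⊆ relInt S U ∧ U ⊆ S ∧ alphaS F S U = R

/-- The dual repeller of an attractor `A` in `S`. -/
def dualRep (F : E → Set E) (S A : Set E) : Set E :=
  {x ∈ S | ¬ omegaS F S {x} ⊆ A}

/-- The dual attractor of a repeller `R` in `S`. -/
def dualAtt (F : E → Set E) (S R : Set E) : Set E :=
  {x ∈ S | ¬ alphaS F S {x} ⊆ R}

end DIncl

open DIncl Set MeasureTheory Filter Topology

namespace DIncl

variable {E : Type*} [NormedAddCommGroup E] [NormedSpace ℝ E]

theorem IsSolOn.mono {F : E → Set E} {X : Set E} {x : ℝ → E} {I J : Set ℝ}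
    (h : IsSolOn F X x I) (hJ : J ⊆ I) : IsSolOn F X x J := by
  obtain ⟨hmem, v, hint, hv, heq⟩ := h
  exact ⟨fun t ht => hmem t (hJ ht), v, fun a ha b hb => hint a (hJ ha) b (hJ hb),
    hv.mono fun t ht htJ => ht (hJ htJ), fun a ha b hb => heq a (hJ ha) b (hJ hb)⟩

theorem isSolOn_const {F : E → Set E} {X : Set E} {c : E} (hc : c ∈ X) (h0 : (0 : E) ∈ F c)
    (I : Set ℝ) : IsSolOn F X (fun _ => c) I :=
  ⟨fun _ _ => hc, fun _ => 0, fun _ _ _ _ => intervalIntegrable_const,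
    .of_forall fun _ _ => h0, fun _ _ _ _ => by simp⟩

theorem mem_mflow_self {F : E → Set E} {X : Set E} {c : E} (hc : c ∈ X) (h0 : (0 : E) ∈ F c)
    (T : ℝ) : c ∈ mflow F X T c :=
  ⟨fun _ => c, isSolOn_const hc h0 _, rfl, rfl⟩

theorem omegaS_subset_of_mflow_subset {F : E → Set E} {S U C : Set E} (hC : IsClosed C)
    {t : ℝ} (ht : 0 ≤ t) (h : ∀ T ≥ t, ∀ a ∈ U, mflow F S T a ⊆ C) : omegaS F S U ⊆ C := by
  refine (biInter_subset_of_mem (show t ∈ Ici 0 from ht)).trans (closure_minimal ?_ hC)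
  simp only [mflowSet, iUnion_subset_iff]
  exact fun T hT => h T hT

theorem closure_subset_omegaS {F : E → Set E} {S U A : Set E}
    (h : ∀ t ≥ 0, A ⊆ mflowSet F S (Ici t) U) : closure A ⊆ omegaS F S U :=
  subset_iInter₂ fun t ht => closure_mono (h t ht)

theorem IsSolOn.monotoneOn {F : ℝ → Set ℝ} {X : Set ℝ} {x : ℝ → ℝ} {I : Set ℝ}
    (hF : ∀ y ∈ X, F y ⊆ Ici 0) (hI : I.OrdConnected) (hx : IsSolOn F X x I) :
    MonotoneOn x I := by
  obtain ⟨hmem, v, -, hv, heq⟩ := hx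
  intro a ha b hb hab
  have hv_nonneg : ∀ᵐ t ∂volume.restrict (Icc a b), 0 ≤ v t := by
    filter_upwards [ae_restrict_of_ae hv, ae_restrict_mem measurableSet_Icc] with t hvt ht
    have htI : t ∈ I := hI.out ha hb ht
    exact hF _ (hmem t htI) (hvt htI)
  rw [heq a ha b hb]
  exact le_add_of_nonneg_right (intervalIntegral.integral_nonneg_of_ae_restrict hab hv_nonneg)

end DIncl

namespace OmegaMeetsAttractor

open Real

noncomputable def F (x : ℝ) : Set ℝ :=
  if x < 0 then {0} else if x = 0 then Icc 0 1 else {1 - x}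

theorem F_of_pos {y : ℝ} (hy : 0 < y) : F y = {1 - y} := by
  simp [F, hy.ne', not_lt.2 hy.le]

theorem F_subset_Ici {y : ℝ} (hy : y ≤ 1) : F y ⊆ Ici 0 := by
  rcases lt_trichotomy y 0 with h | rfl | h
  · simp [F, h]
  · simp [F, Icc_subset_Ici_self]
  · simp [F_of_pos h, hy]

theorem zero_mem_F_of_nonpos {y : ℝ} (hy : y ≤ 0) : (0 : ℝ) ∈ F y := by
  rcases hy.lt_or_eq with h | rfl <;> simp [F, *]

theorem zero_mem_F_one : (0 : ℝ) ∈ F 1 := by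
  simp [F_of_pos one_pos]

noncomputable def sol (s t : ℝ) : ℝ := max 0 (1 - exp (s - t))

noncomputable def solDeriv (s : ℝ) : ℝ → ℝ := (Ici s).indicator fun t => exp (s - t)

theorem sol_of_le {s t : ℝ} (h : t ≤ s) : sol s t = 0 :=
  max_eq_left (by linarith [one_le_exp (sub_nonneg.2 h)])

theorem sol_of_ge {s t : ℝ} (h : s ≤ t) : sol s t = 1 - exp (s - t) :=
  max_eq_right (by linarith [exp_le_one_iff.2 (sub_nonpos.2 h)])

theorem sol_sub_log {s c : ℝ} (hc₀ : 0 ≤ c) (hc₁ : c < 1) : sol s (s - log (1 - c)) = c := by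
  rw [sol_of_ge (by linarith [log_nonpos (by linarith) (by linarith : 1 - c ≤ 1)]),
    sub_sub_cancel, exp_log (by linarith), sub_sub_cancel]

theorem sol_mem_Icc (s t : ℝ) : sol s t ∈ Icc (-1) 1 :=
  ⟨neg_one_lt_zero.le.trans (le_max_left _ _), max_le zero_le_one (by linarith [exp_pos (s - t)])⟩

theorem continuous_sol (s : ℝ) : Continuous (sol s) := by
  unfold sol; fun_prop

theorem hasDerivWithinAt_sol (s t : ℝ) : HasDerivWithinAt (sol s) (solDeriv s t) (Ioi t) t := by
  rcases lt_or_ge t s with h | h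
  · rw [solDeriv, indicator_of_notMem (show t ∉ Ici s from not_le.2 h)]
    refine (hasDerivAt_const t (0 : ℝ)).hasDerivWithinAt.congr_of_eventuallyEq ?_ (sol_of_le h.le)
    filter_upwards [nhdsWithin_le_nhds (Iio_mem_nhds h)] with u hu using sol_of_le (le_of_lt hu)
  · rw [solDeriv, indicator_of_mem (show t ∈ Ici s from h)]
    have hexp : HasDerivAt (fun u => 1 - exp (s - u)) (exp (s - t)) t := by
      simpa using ((hasDerivAt_exp (s - t)).comp t ((hasDerivAt_id t).const_sub s)).const_sub 1
    refine hexp.hasDerivWithinAt.congr_of_eventuallyEq ?_ (sol_of_ge h)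
    filter_upwards [self_mem_nhdsWithin] with u hu using sol_of_ge (h.trans (le_of_lt hu))

theorem intervalIntegrable_solDeriv (s a b : ℝ) : IntervalIntegrable (solDeriv s) volume a b := by
  have hexp : IntervalIntegrable (fun t => exp (s - t)) volume a b :=
    (by fun_prop : Continuous fun t => exp (s - t)).intervalIntegrable a b
  exact intervalIntegrable_iff.2 ((intervalIntegrable_iff.1 hexp).indicator measurableSet_Ici)

theorem solDeriv_mem_F (s t : ℝ) : solDeriv s t ∈ F (sol s t) := by
  rcases lt_or_ge s t with h | h
  · have hpos : 0 < sol s t := by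
      rw [sol_of_ge h.le]; linarith [exp_lt_one_iff.2 (sub_neg.2 h)]
    rw [F_of_pos hpos, sol_of_ge h.le, solDeriv, indicator_of_mem (show t ∈ Ici s from h.le)]
    simp
  · rw [sol_of_le h, F, if_neg (lt_irrefl 0), if_pos rfl, solDeriv]
    rcases h.lt_or_eq with h | rfl
    · simp [indicator_of_notMem (show t ∉ Ici s from not_le.2 h)]
    · simp

theorem isSolOn_sol (s : ℝ) : IsSolOn F (Icc (-1) 1) (sol s) univ :=
  ⟨fun t _ => sol_mem_Icc s t, solDeriv s, fun a _ b _ => intervalIntegrable_solDeriv s a b,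
    .of_forall fun t _ => solDeriv_mem_F s t, fun a _ b _ => by
      rw [intervalIntegral.integral_eq_sub_of_hasDeriv_right (continuous_sol s).continuousOn
        (fun u _ => hasDerivWithinAt_sol s u) (intervalIntegrable_solDeriv s a b)]
      ring⟩

theorem monotoneOn_of_isSolOn {x : ℝ → ℝ} {I : Set ℝ} (hx : IsSolOn F (Icc (-1) 1) x I)
    (hI : I.OrdConnected) : MonotoneOn x I :=
  hx.monotoneOn (fun _ hy => F_subset_Ici hy.2) hI

theorem one_sub_mul_one_add_le {T : ℝ} {x : ℝ → ℝ} (hx : IsSolOn F (Icc (-1) 1) x (Icc 0 T))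
    (hT : 0 ≤ T) (h0 : 0 < x 0) : (1 - x T) * (1 + T) ≤ 1 - x 0 := by
  have hmono := monotoneOn_of_isSolOn hx ordConnected_Icc
  obtain ⟨-, v, hint, hv, heq⟩ := hx
  have h0T : (0 : ℝ) ∈ Icc 0 T := ⟨le_rfl, hT⟩
  have hTT : T ∈ Icc 0 T := ⟨hT, le_rfl⟩
  have hv_ge : ∀ᵐ t ∂volume.restrict (Icc 0 T), 1 - x T ≤ v t := by
    filter_upwards [ae_restrict_of_ae hv, ae_restrict_mem measurableSet_Icc] with t hvt ht
    have hvt := hvt ht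
    rw [F_of_pos (h0.trans_le (hmono h0T ht ht.1)), mem_singleton_iff] at hvt
    linarith [hmono ht hTT ht.2]
  have hint_ge := intervalIntegral.integral_mono_ae_restrict hT intervalIntegrable_const
    (hint 0 h0T T hTT) hv_ge
  rw [intervalIntegral.integral_const, smul_eq_mul, sub_zero] at hint_ge
  linarith [heq 0 h0T T hTT]

theorem isInvSet_Icc : IsInvSet F (Icc (-1) 1) := by
  intro x₀ hx₀
  rcases le_or_gt x₀ 0 with h | h
  · exact ⟨fun _ => x₀, isSolOn_const hx₀ (zero_mem_F_of_nonpos h) univ, rfl⟩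
  rcases hx₀.2.lt_or_eq with h₁ | rfl
  · refine ⟨sol (log (1 - x₀)), isSolOn_sol _, ?_⟩
    simpa using sol_sub_log (s := log (1 - x₀)) h.le h₁
  · exact ⟨fun _ => 1, isSolOn_const hx₀ zero_mem_F_one univ, rfl⟩

theorem mflow_subset_Icc {T a : ℝ} (hT : 0 ≤ T) (ha : 0 ≤ a) :
    mflow F (Icc (-1) 1) T a ⊆ Icc a 1 := by
  rintro _ ⟨x, hx, rfl, rfl⟩
  exact ⟨monotoneOn_of_isSolOn hx ordConnected_Icc ⟨le_rfl, hT⟩ ⟨hT, le_rfl⟩ hT,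
    (hx.1 T ⟨hT, le_rfl⟩).2⟩

theorem mflow_subset_of_pos {T a : ℝ} (hT : 0 ≤ T) (ha : 0 < a) :
    mflow F (Icc (-1) 1) T a ⊆ {z | (1 - z) * (1 + T) ≤ 1 - a ∧ z ≤ 1} := by
  rintro _ ⟨x, hx, rfl, rfl⟩
  exact ⟨one_sub_mul_one_add_le hx hT ha, (hx.1 T ⟨hT, le_rfl⟩).2⟩

theorem omegaS_Ioc : omegaS F (Icc (-1) 1) (Ioc 0 1) = {1} := by
  refine Subset.antisymm (fun y hy => ?_) ?_
  · have hy_le : ∀ t ≥ (0 : ℝ), (1 - y) * (1 + t) ≤ 1 ∧ y ≤ 1 := by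
      intro t ht
      have hC : IsClosed ({z : ℝ | (1 - z) * (1 + t) ≤ 1} ∩ Iic 1) :=
        (isClosed_le (by fun_prop) continuous_const).inter isClosed_Iic
      refine omegaS_subset_of_mflow_subset hC ht (fun T hTt a ha z hz => ?_) hy
      obtain ⟨hz₁, hz₂⟩ := mflow_subset_of_pos (ht.trans hTt) ha.1 hz
      refine ⟨?_, hz₂⟩
      calc (1 - z) * (1 + t) ≤ (1 - z) * (1 + T) := by gcongr
        _ ≤ 1 - a := hz₁
        _ ≤ 1 := by linarith [ha.1]
    by_contra hne
    have hlt : 0 < 1 - y := sub_pos.2 ((hy_le 0 le_rfl).2.lt_of_ne hne)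
    have := (hy_le (1 / (1 - y)) (by positivity)).1
    rw [mul_add, mul_one_div_cancel hlt.ne'] at this
    linarith
  · have hone : ∀ t ≥ (0 : ℝ), {(1 : ℝ)} ⊆ mflowSet F (Icc (-1) 1) (Ici t) (Ioc 0 1) := by
      intro t _
      simp only [singleton_subset_iff, mflowSet, mem_iUnion]
      exact ⟨t, mem_Ici.2 le_rfl, 1, ⟨one_pos, le_rfl⟩,
        mem_mflow_self (by norm_num) zero_mem_F_one t⟩
    simpa using closure_subset_omegaS hone

theorem isAttractorIn_one : IsAttractorIn F (Icc (-1) 1) {1} := by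
  refine ⟨by simp, Ioc 0 1, ?_, fun y hy => ⟨by linarith [hy.1], hy.2⟩, omegaS_Ioc⟩
  rw [singleton_subset_iff]
  exact ⟨by norm_num, mem_nhdsWithin.2 ⟨Ioi 0, isOpen_Ioi, by norm_num, fun z hz => ⟨hz.1, hz.2.2⟩⟩⟩

theorem omegaS_zero : omegaS F (Icc (-1) 1) {0} = Icc 0 1 := by
  refine Subset.antisymm ?_ ?_
  · refine omegaS_subset_of_mflow_subset isClosed_Icc le_rfl fun T hT a ha => ?_
    rw [mem_singleton_iff.1 ha]
    exact mflow_subset_Icc hT le_rfl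
  · rw [← closure_Ico zero_ne_one]
    refine closure_subset_omegaS fun t ht c hc => ?_
    have hlog : log (1 - c) ≤ 0 := log_nonpos (by linarith [hc.2]) (by linarith [hc.1])
    simp only [mflowSet, mem_iUnion]
    exact ⟨t - log (1 - c), by simp [hlog], 0, rfl, sol t, (isSolOn_sol t).mono (subset_univ _),
      sol_of_le ht, sol_sub_log hc.1 hc.2⟩

end OmegaMeetsAttractor

/-- Example: the omega-limit set of a point can meet an attractor without being
contained in it. -/
theorem example_omega_meets_attractor (F : ℝ → Set ℝ)
    (hF : ∀ x : ℝ, F x =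
      if x < 0 then ({0} : Set ℝ) else if x = 0 then Icc (0:ℝ) 1 else {1 - x}) :
    IsInvSet F (Icc (-1:ℝ) 1) ∧
    IsAttractorIn F (Icc (-1:ℝ) 1) {1} ∧
    omegaS F (Icc (-1:ℝ) 1) {0} = Icc (0:ℝ) 1 ∧
    (Icc (0:ℝ) 1 ∩ ({1} : Set ℝ)).Nonempty ∧
    ¬ (Icc (0:ℝ) 1 ⊆ ({1} : Set ℝ)) := by
  obtain rfl : F = OmegaMeetsAttractor.F := funext hF
  refine ⟨OmegaMeetsAttractor.isInvSet_Icc, OmegaMeetsAttractor.isAttractorIn_one,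
    OmegaMeetsAttractor.omegaS_zero, ⟨1, by simp⟩, fun h => ?_⟩
  simpa using h (show (0 : ℝ) ∈ Icc 0 1 by norm_num)
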